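/- In logistic or probit regression with a multivariate Cauchy prior on β, if there is complete separation in the data, then E(β_j | y) does not exist for any j = 1,…,p. -/

import Mathlib

open Real MeasureTheory Matrix Pointwise
open scoped ENNReal NNReal

/-- The standard normal cumulative distribution function. -/
noncomputable def stdNormalCDF (t : ℝ) : ℝ :=
  ∫ s in Set.Iic t, (Real.sqrt (2 * π))⁻¹ * Real.exp (-s ^ 2 / 2)

lemma gauss_int : Integrable (fun s : ℝ => (Real.sqrt (2 * π))⁻¹ * Real.exp (-s ^ 2 / 2)) := by
  have h : Integrable (fun s : ℝ => Real.exp (-(1/2) * s ^ 2)) := integrable_exp_neg_mul_sq (by norm_num)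
  have := h.const_mul (Real.sqrt (2 * π))⁻¹
  convert this using 2 with s
  ring_nf

lemma gauss_total : ∫ s : ℝ, (Real.sqrt (2 * π))⁻¹ * Real.exp (-s ^ 2 / 2) = 1 := by
  rw [MeasureTheory.integral_const_mul]
  have h : ∫ s : ℝ, Real.exp (-(1/2) * s ^ 2) = Real.sqrt (π / (1/2)) := integral_gaussian (1/2)
  have h2 : ∫ s : ℝ, Real.exp (-s ^ 2 / 2) = Real.sqrt (2 * π) := by
    rw [show (2 * π) = π / (1/2) by ring, ← h]
    congr 1 with s; ring_nf
  rw [h2, inv_mul_cancel₀]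
  positivity

lemma stdNormalCDF_zero : stdNormalCDF 0 = 1/2 := by
  have heven : ∫ s in Set.Iic (0:ℝ), (Real.sqrt (2 * π))⁻¹ * Real.exp (-s ^ 2 / 2)
      = ∫ s in Set.Ioi (0:ℝ), (Real.sqrt (2 * π))⁻¹ * Real.exp (-s ^ 2 / 2) := by
    have h := integral_comp_neg_Iic (0:ℝ)
      (fun s => (Real.sqrt (2 * π))⁻¹ * Real.exp (-s ^ 2 / 2))
    rw [neg_zero] at h
    rw [← h]
    congr 1 with s
    ring_nf
  have hsplit : (∫ s in Set.Iic (0:ℝ), (Real.sqrt (2 * π))⁻¹ * Real.exp (-s ^ 2 / 2))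
      + ∫ s in Set.Ioi (0:ℝ), (Real.sqrt (2 * π))⁻¹ * Real.exp (-s ^ 2 / 2)
      = ∫ s : ℝ, (Real.sqrt (2 * π))⁻¹ * Real.exp (-s ^ 2 / 2) :=
    intervalIntegral.integral_Iic_add_Ioi gauss_int.integrableOn gauss_int.integrableOn
  rw [gauss_total] at hsplit
  unfold stdNormalCDF
  linarith [heven, hsplit]

lemma stdNormalCDF_mono : Monotone stdNormalCDF := by
  intro a b hab
  exact setIntegral_mono_set gauss_int.integrableOn
    (Filter.Eventually.of_forall fun s => by positivity)
    (HasSubset.Subset.eventuallyLE (Set.Iic_subset_Iic.mpr hab))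

set_option maxHeartbeats 1000000 in
/-- In logistic or probit regression with a multivariate Cauchy prior (density
proportional to `[1+(β−μ)ᵀΣ⁻¹(β−μ)]^{-(1+p)/2}`, `Σ` positive definite), if there is
complete separation in the data then `E(β_j | y)` does not exist for any `j`. -/
theorem complete_separation_multivariate_cauchy_no_posterior_mean (n p : ℕ)
    (X : Fin n → Fin p → ℝ) (y : Fin n → Bool)
    (f₁ : ℝ → ℝ)
    (hf₁ : f₁ = (fun t => Real.exp t / (1 + Real.exp t)) ∨ f₁ = stdNormalCDF)
    (S : Matrix (Fin p) (Fin p) ℝ) (hS : S.PosDef) (μ : Fin p → ℝ)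
    (c : ℝ) (hc : 0 < c)
    (hsep : ∃ α : Fin p → ℝ, ∀ i,
      (y i = true → 0 < ∑ k, X i k * α k) ∧ (y i = false → ∑ k, X i k * α k < 0)) :
    ∀ j, ¬ Integrable (fun β : Fin p → ℝ =>
      |β j| *
      ((∏ i, if y i then f₁ (∑ k, X i k * β k) else 1 - f₁ (∑ k, X i k * β k)) *
       (c * (1 + (β - μ) ⬝ᵥ (S⁻¹ *ᵥ (β - μ))) ^ (-((1 + (p : ℝ)) / 2))))) := by
  obtain ⟨α, hα⟩ := hsep
  intro j hInt
  set e : ℝ := -((1 + (p : ℝ)) / 2) with he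
  have he0 : e ≤ 0 := by
    rw [he]; have : (0:ℝ) ≤ (p:ℝ) := Nat.cast_nonneg p; linarith
  set g : (Fin p → ℝ) → ℝ := fun β : Fin p → ℝ =>
      |β j| *
      ((∏ i, if y i then f₁ (∑ k, X i k * β k) else 1 - f₁ (∑ k, X i k * β k)) *
       (c * (1 + (β - μ) ⬝ᵥ (S⁻¹ *ᵥ (β - μ))) ^ e)) with hg
  -- half bounds on f₁
  have hhalf₁ : ∀ t : ℝ, 0 < t → 1/2 ≤ f₁ t := by
    rcases hf₁ with rfl | rfl
    · intro t ht
      have h2 : (0:ℝ) < 1 + Real.exp t := by positivity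
      rw [le_div_iff₀ h2]
      nlinarith [Real.one_le_exp ht.le]
    · intro t ht
      calc (1:ℝ)/2 = stdNormalCDF 0 := stdNormalCDF_zero.symm
        _ ≤ stdNormalCDF t := stdNormalCDF_mono ht.le
  have hhalf₂ : ∀ t : ℝ, t < 0 → 1/2 ≤ 1 - f₁ t := by
    rcases hf₁ with rfl | rfl
    · intro t ht
      have h1 : Real.exp t ≤ 1 := Real.exp_le_one_iff.mpr ht.le
      have h2 : (0:ℝ) < 1 + Real.exp t := by positivity
      have h3 : Real.exp t / (1 + Real.exp t) ≤ 1/2 := by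
        rw [div_le_iff₀ h2]; nlinarith
      simp only []
      linarith
    · intro t ht
      have h1 : stdNormalCDF t ≤ 1/2 := by
        rw [← stdNormalCDF_zero]; exact stdNormalCDF_mono ht.le
      linarith
  -- the separating open cone
  set U : Set (Fin p → ℝ) := {β | ∀ i, (y i = true → 0 < ∑ k, X i k * β k) ∧
      (y i = false → ∑ k, X i k * β k < 0)} with hUdef
  have hUopen : IsOpen U := by
    have hU2 : U = ⋂ i, {β : Fin p → ℝ | (y i = true → 0 < ∑ k, X i k * β k) ∧
        (y i = false → ∑ k, X i k * β k < 0)} := by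
      ext β; simp [hUdef, Set.mem_iInter]
    rw [hU2]
    refine isOpen_iInter_of_finite fun i => ?_
    have hcont : Continuous fun β : Fin p → ℝ => ∑ k, X i k * β k :=
      continuous_finset_sum _ fun k _ => continuous_const.mul (continuous_apply k)
    rcases Bool.eq_false_or_eq_true (y i) with h | h
    · have hset : {β : Fin p → ℝ | (y i = true → 0 < ∑ k, X i k * β k) ∧
          (y i = false → ∑ k, X i k * β k < 0)} = {β | 0 < ∑ k, X i k * β k} := by
        ext β; simp [h]
      rw [hset]
      exact isOpen_lt continuous_const hcont
    · have hset : {β : Fin p → ℝ | (y i = true → 0 < ∑ k, X i k * β k) ∧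
          (y i = false → ∑ k, X i k * β k < 0)} = {β | ∑ k, X i k * β k < 0} := by
        ext β; simp [h]
      rw [hset]
      exact isOpen_lt hcont continuous_const
  have hαU : α ∈ U := hα
  obtain ⟨ε, hε, hball⟩ := Metric.isOpen_iff.1 hUopen α hαU
  -- perturb α to have nonzero j-th coordinate
  set α' : Fin p → ℝ := Function.update α j (α j + if 0 ≤ α j then ε/2 else -(ε/2)) with hα'def
  have hα'j : ε/2 ≤ |α' j| := by
    rw [hα'def, Function.update_self]
    split_ifs with h
    · rw [abs_of_nonneg (by linarith)]; linarith
    · rw [abs_of_nonpos (by linarith)]; linarith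
  have hα'α : dist α' α ≤ ε/2 := by
    rw [dist_pi_le_iff (by positivity)]
    intro k
    rw [hα'def]
    rcases eq_or_ne k j with rfl | hk
    · rw [Function.update_self, Real.dist_eq]
      split_ifs <;> simp [abs_of_nonneg, abs_of_nonpos, le_of_lt hε] <;> rw [abs_of_nonneg (by linarith)]
    · rw [Function.update_of_ne hk, dist_self]; positivity
  obtain ⟨r, hrdef⟩ : ∃ t : ℝ, t = ε/16 := ⟨_, rfl⟩
  have hr : 0 < r := by rw [hrdef]; linarith
  set B := Metric.ball α' r with hBdef
  have hBU : B ⊆ U := by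
    intro b hb
    apply hball
    rw [Metric.mem_ball] at hb ⊢
    calc dist b α ≤ dist b α' + dist α' α := dist_triangle _ _ _
      _ < r + ε/2 := by exact add_lt_add_of_lt_of_le hb hα'α
      _ ≤ ε := by rw [hrdef]; linarith
  obtain ⟨δ, hδdef⟩ : ∃ t : ℝ, t = 7/16 * ε := ⟨_, rfl⟩
  have hδ : 0 < δ := by rw [hδdef]; linarith
  have hbj : ∀ b ∈ B, δ ≤ |b j| := by
    intro b hb
    have h1 : |b j - α' j| ≤ ‖b - α'‖ := by
      simpa [Real.norm_eq_abs] using norm_le_pi_norm (b - α') j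
    rw [Metric.mem_ball, dist_eq_norm] at hb
    have := abs_sub_abs_le_abs_sub (α' j) (b j)
    rw [abs_sub_comm (α' j) (b j)] at this
    rw [hδdef]
    linarith [hα'j, h1, hb.le]
  have hN : ε/2 ≤ ‖α'‖ := le_trans hα'j (by simpa [Real.norm_eq_abs] using norm_le_pi_norm α' j)
  obtain ⟨r₀, hr₀def⟩ : ∃ t : ℝ, t = ‖α'‖ - r := ⟨_, rfl⟩
  obtain ⟨R₀, hR₀def⟩ : ∃ t : ℝ, t = ‖α'‖ + r := ⟨_, rfl⟩
  have hr₀ : 0 < r₀ := by rw [hr₀def, hrdef]; linarith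
  have hshell : ∀ b ∈ B, r₀ ≤ ‖b‖ ∧ ‖b‖ ≤ R₀ := by
    intro b hb
    rw [Metric.mem_ball, dist_eq_norm] at hb
    constructor
    · have := norm_sub_norm_le (b - α') (-α')
      simp only [sub_neg_eq_add, sub_add_cancel] at this
      have h2 : ‖-α'‖ = ‖α'‖ := norm_neg _
      rw [hr₀def]
      have h3 := norm_sub_norm_le α' b
      rw [← dist_eq_norm, dist_comm, dist_eq_norm] at h3
      linarith [h3, hb.le]
    · have := norm_le_norm_add_norm_sub' b α'
      rw [hR₀def]
      have h4 : ‖b‖ ≤ ‖α'‖ + ‖b - α'‖ := by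
        calc ‖b‖ = ‖α' + (b - α')‖ := by ring_nf
          _ ≤ ‖α'‖ + ‖b - α'‖ := norm_add_le _ _
      linarith [h4, hb.le]
  have hR₀2r₀ : R₀ < 2 * r₀ := by rw [hR₀def, hr₀def, hrdef]; linarith
  -- dilated balls
  set A : ℕ → Set (Fin p → ℝ) := fun m => ((2:ℝ)^m) • B with hAdef
  have h2m : ∀ m : ℕ, (0:ℝ) < 2^m := fun m => by positivity
  have hAball : ∀ m, A m = Metric.ball (((2:ℝ)^m) • α') (2^m * r) := by
    intro m
    rw [hAdef]
    have := _root_.smul_ball (c := ((2:ℝ)^m)) (ne_of_gt (h2m m)) α' r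
    simpa [Real.norm_eq_abs, abs_of_pos (h2m m)] using this
  have hAmeas : ∀ m, MeasurableSet (A m) := fun m => by
    rw [hAball]; exact measurableSet_ball
  have hAnorm : ∀ m, ∀ x ∈ A m, 2^m * r₀ ≤ ‖x‖ ∧ ‖x‖ ≤ 2^m * R₀ := by
    intro m x hx
    obtain ⟨b, hb, rfl⟩ := hx
    have hnb : ‖((2:ℝ)^m) • b‖ = 2^m * ‖b‖ := by
      rw [norm_smul, Real.norm_eq_abs, abs_of_pos (h2m m)]
    obtain ⟨h1, h2⟩ := hshell b hb
    constructor
    · rw [hnb]; exact mul_le_mul_of_nonneg_left h1 (h2m m).le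
    · rw [hnb]; exact mul_le_mul_of_nonneg_left h2 (h2m m).le
  have hdisj : Pairwise (Function.onFun Disjoint A) := by
    have key : ∀ a b : ℕ, a < b → Disjoint (A a) (A b) := by
      intro a b hab
      rw [Set.disjoint_left]
      intro x hxa hxb
      obtain ⟨_, h1⟩ := hAnorm a x hxa
      obtain ⟨h2, _⟩ := hAnorm b x hxb
      have h3 : (2:ℝ)^(a+1) ≤ 2^b := pow_le_pow_right₀ one_le_two hab
      have h4 : (2:ℝ)^(a+1) = 2^a * 2 := by rw [pow_succ]
      nlinarith [h2m a, h2m b, hr₀]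
    intro a b hne
    rcases hne.lt_or_gt with h | h
    · exact key _ _ h
    · exact (key _ _ h).symm
  -- cone property
  have hAU : ∀ m, ∀ x ∈ A m, x ∈ U := by
    intro m x hx
    obtain ⟨b, hb, rfl⟩ := hx
    have hbU := hBU hb
    intro i
    have hsum : ∑ k, X i k * (((2:ℝ)^m) • b) k = 2^m * ∑ k, X i k * b k := by
      rw [Finset.mul_sum]
      refine Finset.sum_congr rfl fun k _ => ?_
      simp [Pi.smul_apply, smul_eq_mul]; ring
    constructor
    · intro hyi
      rw [hsum]
      exact mul_pos (h2m m) ((hbU i).1 hyi)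
    · intro hyi
      rw [hsum]
      exact mul_neg_of_pos_of_neg (h2m m) ((hbU i).2 hyi)
  -- likelihood lower bound on U
  have hlik : ∀ x ∈ U, ((1:ℝ)/2)^n ≤
      ∏ i, if y i then f₁ (∑ k, X i k * x k) else 1 - f₁ (∑ k, X i k * x k) := by
    intro x hx
    calc ((1:ℝ)/2)^n = ∏ _i : Fin n, ((1:ℝ)/2) := by
          rw [Finset.prod_const, Finset.card_univ, Fintype.card_fin]
      _ ≤ _ := by
          refine Finset.prod_le_prod (fun i _ => by norm_num) (fun i _ => ?_)
          rcases Bool.eq_false_or_eq_true (y i) with h | h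
          · simp only [h, if_true]
            exact hhalf₁ _ ((hx i).1 h)
          · simp only [h, Bool.false_eq_true, if_false]
            exact hhalf₂ _ ((hx i).2 h)
  -- quadratic form bounds
  obtain ⟨M, hMdef⟩ : ∃ t : ℝ, t = ∑ k, ∑ l, |S⁻¹ k l| := ⟨_, rfl⟩
  have hM : 0 ≤ M := by
    rw [hMdef]; positivity
  have hQ0 : ∀ v : Fin p → ℝ, 0 ≤ v ⬝ᵥ (S⁻¹ *ᵥ v) := by
    intro v
    have := hS.inv.posSemidef.dotProduct_mulVec_nonneg v
    simpa using this
  have hQub : ∀ v : Fin p → ℝ, v ⬝ᵥ (S⁻¹ *ᵥ v) ≤ M * ‖v‖^2 := by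
    intro v
    have hexp : v ⬝ᵥ (S⁻¹ *ᵥ v) = ∑ k, ∑ l, v k * (S⁻¹ k l * v l) := by
      simp [dotProduct, Matrix.mulVec, Finset.mul_sum]
    have hrhs : M * ‖v‖^2 = ∑ k, ∑ l, |S⁻¹ k l| * ‖v‖^2 := by
      rw [hMdef, Finset.sum_mul]
      refine Finset.sum_congr rfl fun k _ => ?_
      rw [Finset.sum_mul]
    rw [hexp, hrhs]
    refine Finset.sum_le_sum fun k _ => Finset.sum_le_sum fun l _ => ?_
    have h1 : |v k| ≤ ‖v‖ := by simpa [Real.norm_eq_abs] using norm_le_pi_norm v k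
    have h2 : |v l| ≤ ‖v‖ := by simpa [Real.norm_eq_abs] using norm_le_pi_norm v l
    calc v k * (S⁻¹ k l * v l) ≤ |v k * (S⁻¹ k l * v l)| := le_abs_self _
      _ = |v k| * (|S⁻¹ k l| * |v l|) := by rw [abs_mul, abs_mul]
      _ ≤ ‖v‖ * (|S⁻¹ k l| * ‖v‖) := by
          refine mul_le_mul h1 (mul_le_mul_of_nonneg_left h2 (abs_nonneg _)) (by positivity) ?_
          exact norm_nonneg v
      _ = |S⁻¹ k l| * ‖v‖^2 := by ring
  obtain ⟨K, hKdef⟩ : ∃ t : ℝ, t = R₀ + ‖μ‖ := ⟨_, rfl⟩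
  have hK : 0 < K := by
    rw [hKdef, hR₀def]
    have := norm_nonneg μ
    have := norm_nonneg α'
    linarith
  obtain ⟨K₂, hK₂def⟩ : ∃ t : ℝ, t = 1 + M * K^2 := ⟨_, rfl⟩
  have hK₂ : 0 < K₂ := by
    have h9 : 0 ≤ M * K^2 := mul_nonneg hM (sq_nonneg K)
    rw [hK₂def]; linarith
  -- prior lower bound on A m
  have hQbound : ∀ m, ∀ x ∈ A m, 1 + (x - μ) ⬝ᵥ (S⁻¹ *ᵥ (x - μ)) ≤ ((2:ℝ)^m)^2 * K₂ := by
    intro m x hx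
    have h3 : (1:ℝ) ≤ 2^m := one_le_pow₀ (by norm_num : (1:ℝ) ≤ 2)
    have h1 : ‖x - μ‖ ≤ 2^m * K := by
      have hxn := (hAnorm m x hx).2
      have h2 : ‖x - μ‖ ≤ ‖x‖ + ‖μ‖ := norm_sub_le _ _
      have h4 : ‖μ‖ ≤ 2^m * ‖μ‖ := le_mul_of_one_le_left (norm_nonneg μ) h3
      have h5 : (2:ℝ)^m * K = 2^m * R₀ + 2^m * ‖μ‖ := by rw [hKdef]; ring
      linarith
    have hq1 : (x - μ) ⬝ᵥ (S⁻¹ *ᵥ (x - μ)) ≤ M * ‖x - μ‖^2 := hQub _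
    have hq2 : ‖x - μ‖^2 ≤ (2^m * K)^2 := pow_le_pow_left₀ (norm_nonneg _) h1 2
    have hq3 : M * ‖x - μ‖^2 ≤ M * (2^m * K)^2 := mul_le_mul_of_nonneg_left hq2 hM
    have h6 : (1:ℝ) ≤ ((2:ℝ)^m)^2 := one_le_pow₀ h3
    have h7 : M * (2^m * K)^2 = ((2:ℝ)^m)^2 * (M * K^2) := by ring
    have h8 : ((2:ℝ)^m)^2 * (1 + M * K^2) = ((2:ℝ)^m)^2 + ((2:ℝ)^m)^2 * (M * K^2) := by ring
    rw [hK₂def]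
    linarith only [hq1, hq3, h6, h7, h8]
  -- pointwise lower bound
  have hpt : ∀ m : ℕ, ∀ x ∈ A m,
      ((2:ℝ)^m * δ) * ((1/2)^n * (c * (((2:ℝ)^m)^2 * K₂) ^ e)) ≤ g x := by
    intro m x hx
    have hj : 2^m * δ ≤ |x j| := by
      obtain ⟨b, hb, rfl⟩ := hx
      show 2^m * δ ≤ |(((2:ℝ)^m) • b) j|
      have hbj' : (((2:ℝ)^m) • b) j = 2^m * b j := rfl
      rw [hbj', abs_mul, abs_of_pos (h2m m)]
      exact mul_le_mul_of_nonneg_left (hbj b hb) (h2m m).le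
    have hlik' := hlik x (hAU m x hx)
    have hQx0 : 0 ≤ (x - μ) ⬝ᵥ (S⁻¹ *ᵥ (x - μ)) := hQ0 _
    have h1Q : (0:ℝ) < 1 + (x - μ) ⬝ᵥ (S⁻¹ *ᵥ (x - μ)) := by linarith
    have hrp : (((2:ℝ)^m)^2 * K₂) ^ e ≤ (1 + (x - μ) ⬝ᵥ (S⁻¹ *ᵥ (x - μ))) ^ e :=
      Real.rpow_le_rpow_of_nonpos h1Q (hQbound m x hx) he0
    have hP1pos : (0:ℝ) < (((2:ℝ)^m)^2 * K₂) ^ e :=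
      Real.rpow_pos_of_pos (mul_pos (pow_pos (h2m m) 2) hK₂) e
    have hn0 : (0:ℝ) ≤ (1/2:ℝ)^n := by positivity
    rw [hg]
    refine mul_le_mul hj ?_ (mul_nonneg hn0 (mul_nonneg hc.le hP1pos.le)) (abs_nonneg _)
    refine mul_le_mul hlik' (mul_le_mul_of_nonneg_left hrp hc.le)
      (mul_nonneg hc.le hP1pos.le) (le_trans hn0 hlik')
  -- the constant
  obtain ⟨C₀, hC₀def⟩ : ∃ t : ℝ, t = δ * ((1/2)^n * (c * K₂ ^ e)) := ⟨_, rfl⟩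
  have hC₀ : 0 < C₀ := by
    rw [hC₀def]
    exact mul_pos hδ (mul_pos (by positivity) (mul_pos hc (Real.rpow_pos_of_pos hK₂ e)))
  have hkey : ∀ m : ℕ, ((2:ℝ)^m * δ) * ((1/2)^n * (c * (((2:ℝ)^m)^2 * K₂) ^ e)) * ((2:ℝ)^m)^p
      = C₀ := by
    intro m
    have hx : (0:ℝ) < 2^m := h2m m
    have h1 : (((2:ℝ)^m)^2 * K₂) ^ e = ((2:ℝ)^m)^(2*e) * K₂^e := by
      rw [Real.mul_rpow (by positivity) hK₂.le]
      congr 1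
      rw [← Real.rpow_natCast ((2:ℝ)^m) 2, ← Real.rpow_mul hx.le]
      norm_num
    have h2 : ((2:ℝ)^m) * ((2:ℝ)^m)^(2*e) * ((2:ℝ)^m)^(p:ℕ) = 1 := by
      rw [← Real.rpow_natCast ((2:ℝ)^m) p]
      nth_rewrite 1 [← Real.rpow_one ((2:ℝ)^m)]
      rw [← Real.rpow_add hx, ← Real.rpow_add hx]
      rw [show (1:ℝ) + 2*e + (p:ℝ) = 0 by rw [he]; push_cast; ring, Real.rpow_zero]
    calc ((2:ℝ)^m * δ) * ((1/2)^n * (c * (((2:ℝ)^m)^2 * K₂) ^ e)) * ((2:ℝ)^m)^p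
        = (((2:ℝ)^m) * ((2:ℝ)^m)^(2*e) * ((2:ℝ)^m)^(p:ℕ)) * (δ * ((1/2)^n * (c * K₂^e))) := by
          rw [h1]; ring
      _ = C₀ := by rw [h2, one_mul, hC₀def]
  -- volume of the dilated balls
  have hvol : ∀ m, volume (A m) = ENNReal.ofReal (((2:ℝ)^m)^p) * volume B := by
    intro m
    rw [hAdef]
    have h := Measure.addHaar_smul (volume : Measure (Fin p → ℝ)) ((2:ℝ)^m) B
    rw [h]
    congr 2
    rw [abs_of_nonneg (by positivity)]
    rw [show Module.finrank ℝ (Fin p → ℝ) = p by simp]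
  have hvB0 : volume B ≠ 0 := (Metric.measure_ball_pos volume α' hr).ne'
  -- lower bound each piece of the integral
  have hge : ∀ m : ℕ, ENNReal.ofReal C₀ * volume B ≤ ∫⁻ x in A m, (‖g x‖₊ : ℝ≥0∞) := by
    intro m
    have hL0 : (0:ℝ) ≤ ((2:ℝ)^m * δ) * ((1/2)^n * (c * (((2:ℝ)^m)^2 * K₂) ^ e)) := by
      have hP1pos : (0:ℝ) < (((2:ℝ)^m)^2 * K₂) ^ e :=
        Real.rpow_pos_of_pos (mul_pos (pow_pos (h2m m) 2) hK₂) e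
      have hn0 : (0:ℝ) ≤ (1/2:ℝ)^n := by positivity
      exact mul_nonneg (mul_nonneg (h2m m).le hδ.le)
        (mul_nonneg hn0 (mul_nonneg hc.le hP1pos.le))
    calc ENNReal.ofReal C₀ * volume B
        = ENNReal.ofReal (((2:ℝ)^m * δ) * ((1/2)^n * (c * (((2:ℝ)^m)^2 * K₂) ^ e))
            * ((2:ℝ)^m)^p) * volume B := by rw [hkey m]
      _ = ENNReal.ofReal (((2:ℝ)^m * δ) * ((1/2)^n * (c * (((2:ℝ)^m)^2 * K₂) ^ e)))
            * (ENNReal.ofReal (((2:ℝ)^m)^p) * volume B) := by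
          rw [ENNReal.ofReal_mul hL0, mul_assoc]
      _ = ENNReal.ofReal (((2:ℝ)^m * δ) * ((1/2)^n * (c * (((2:ℝ)^m)^2 * K₂) ^ e)))
            * volume (A m) := by rw [hvol m]
      _ = ∫⁻ _x in A m, ENNReal.ofReal (((2:ℝ)^m * δ) * ((1/2)^n * (c * (((2:ℝ)^m)^2 * K₂) ^ e))) := by
          rw [setLIntegral_const]
      _ ≤ ∫⁻ x in A m, (‖g x‖₊ : ℝ≥0∞) := by
          refine lintegral_mono_ae ((ae_restrict_iff' (hAmeas m)).2
            (Filter.Eventually.of_forall fun x hx => ?_))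
          rw [← enorm_eq_nnnorm, ← ofReal_norm]
          refine ENNReal.ofReal_le_ofReal ?_
          rw [Real.norm_eq_abs]
          exact le_trans (hpt m x hx) (le_abs_self _)
  -- conclude
  have h1 : ∑' _m : ℕ, (ENNReal.ofReal C₀ * volume B) ≤ ∑' m, ∫⁻ x in A m, (‖g x‖₊ : ℝ≥0∞) :=
    ENNReal.tsum_le_tsum hge
  rw [← lintegral_iUnion hAmeas hdisj] at h1
  have h2 : (∫⁻ x in ⋃ m, A m, (‖g x‖₊ : ℝ≥0∞)) ≤ ∫⁻ x, (‖g x‖₊ : ℝ≥0∞) :=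
    setLIntegral_le_lintegral _ _
  have hne0 : ENNReal.ofReal C₀ * volume B ≠ 0 :=
    mul_ne_zero (ENNReal.ofReal_pos.mpr hC₀).ne' hvB0
  have h3 : (⊤:ℝ≥0∞) ≤ ∫⁻ x, (‖g x‖₊ : ℝ≥0∞) := by
    rw [← ENNReal.tsum_const_eq_top_of_ne_zero (α := ℕ) hne0]
    exact le_trans h1 h2
  exact absurd (lt_of_le_of_lt h3 hInt.hasFiniteIntegral) (lt_irrefl _)
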